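/- With the notation of the previous statement, the second derivative of f at φ₀ equals 2(πλ₀ρ(λ₀))²/c, where ρ(λ₀) = (1/(2πλ₀))·√(((1+√c)²-λ₀)(λ₀-(1-√c)²)); i.e., the Taylor expansion at the minimum is f(φ₀+t) = ((πλ₀ρ(λ₀))²/c)·t² + O(t³). -/

import Mathlib

open Real

/-- The phase `Re V` along the circle of radius `λ₀^{-1/2}`. -/
noncomputable def phaseBulk (c l₀ : ℝ) : ℝ → ℝ := fun φ =>
  -Real.sqrt l₀ * Real.cos φ
    - (c / 2) * Real.log (1 + l₀⁻¹ - 2 * (Real.sqrt l₀)⁻¹ * Real.cos φ)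
    + Real.log l₀⁻¹
    + ((l₀ - c + 1) / 2 + (c / 2) * Real.log (c / l₀) - (1 / 2) * Real.log (1 / l₀))

/-- The second derivative of the phase at the critical angle equals `2(πλ₀ρ(λ₀))²/c`. -/
theorem phase_second_deriv_at_saddle (c l₀ φ₀ : ℝ) (hc : 1 < c)
    (hl : l₀ ∈ Set.Ioo ((1 - Real.sqrt c) ^ 2) ((1 + Real.sqrt c) ^ 2))
    (hφ₀ : φ₀ ∈ Set.Ioo 0 π)
    (hcos : Real.cos φ₀ = (Real.sqrt l₀)⁻¹ * (l₀ - c + 1) / 2) :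
    deriv (deriv (phaseBulk c l₀)) φ₀ =
      2 * (π * l₀ * ((1 / (2 * π * l₀)) *
          Real.sqrt (((1 + Real.sqrt c) ^ 2 - l₀) * (l₀ - (1 - Real.sqrt c) ^ 2)))) ^ 2 / c := by
  obtain ⟨hl1, hl2⟩ := hl
  have hc0 : (0:ℝ) < c := by linarith
  have hl0 : (0:ℝ) < l₀ := lt_of_le_of_lt (sq_nonneg _) hl1
  set s := Real.sqrt l₀ with hsdef
  have hs0 : 0 < s := Real.sqrt_pos.mpr hl0
  have hs2 : s ^ 2 = l₀ := Real.sq_sqrt hl0.le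
  set A : ℝ → ℝ := fun φ => 1 + l₀⁻¹ - 2 * s⁻¹ * Real.cos φ with hAdef
  have hA0 : A φ₀ = c / l₀ := by
    simp only [hAdef, hcos]
    rw [← hs2]
    field_simp
    ring
  have hA0pos : 0 < A φ₀ := by rw [hA0]; positivity
  have hAc : Continuous A := by fun_prop
  have hev : ∀ᶠ φ in nhds φ₀, 0 < A φ :=
    hAc.continuousAt.eventually (eventually_gt_nhds hA0pos)
  have hA' : ∀ φ : ℝ, HasDerivAt A (2 * s⁻¹ * Real.sin φ) φ := by
    intro φ
    have h := ((Real.hasDerivAt_cos φ).const_mul (2 * s⁻¹)).const_sub (1 + l₀⁻¹)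
    exact h.congr_deriv (by ring)
  have hderiv : ∀ φ : ℝ, 0 < A φ →
      HasDerivAt (phaseBulk c l₀)
        (s * Real.sin φ - c / 2 * (2 * s⁻¹ * Real.sin φ / A φ)) φ := by
    intro φ hφ
    have hlog : HasDerivAt (fun φ => Real.log (A φ)) (2 * s⁻¹ * Real.sin φ / A φ) φ :=
      (hA' φ).log hφ.ne'
    have h1 : HasDerivAt (fun φ => -s * Real.cos φ) (-s * -Real.sin φ) φ :=
      (Real.hasDerivAt_cos φ).const_mul (-s)
    have h := (((h1.sub (hlog.const_mul (c / 2))).add_const (Real.log l₀⁻¹)).add_const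
      ((l₀ - c + 1) / 2 + (c / 2) * Real.log (c / l₀) - (1 / 2) * Real.log (1 / l₀)))
    exact h.congr_deriv (by ring)
  set g : ℝ → ℝ := fun φ => s * Real.sin φ - c / 2 * (2 * s⁻¹ * Real.sin φ / A φ) with hgdef
  have hfg : deriv (phaseBulk c l₀) =ᶠ[nhds φ₀] g :=
    hev.mono fun φ hφ => (hderiv φ hφ).deriv
  have hkey : deriv (deriv (phaseBulk c l₀)) φ₀ = deriv g φ₀ := hfg.deriv_eq
  have hnum : HasDerivAt (fun φ => 2 * s⁻¹ * Real.sin φ) (2 * s⁻¹ * Real.cos φ₀) φ₀ := by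
    simpa using (Real.hasDerivAt_sin φ₀).const_mul (2 * s⁻¹)
  have hquot := hnum.div (hA' φ₀) hA0pos.ne'
  have h2 : HasDerivAt (fun φ => s * Real.sin φ) (s * Real.cos φ₀) φ₀ :=
    (Real.hasDerivAt_sin φ₀).const_mul s
  have hg : HasDerivAt g
      (s * Real.cos φ₀ - c / 2 *
        ((2 * s⁻¹ * Real.cos φ₀ * A φ₀ - 2 * s⁻¹ * Real.sin φ₀ * (2 * s⁻¹ * Real.sin φ₀)) /
          (A φ₀) ^ 2)) φ₀ := h2.sub (hquot.const_mul (c / 2))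
  rw [hkey, hg.deriv]
  -- simplify LHS to 2 l₀ sin² / c
  have hsin2 : Real.sin φ₀ ^ 2 = 1 - Real.cos φ₀ ^ 2 := by
    nlinarith [Real.sin_sq_add_cos_sq φ₀]
  have step1 : s * Real.cos φ₀ - c / 2 *
      ((2 * s⁻¹ * Real.cos φ₀ * A φ₀ - 2 * s⁻¹ * Real.sin φ₀ * (2 * s⁻¹ * Real.sin φ₀)) /
        (A φ₀) ^ 2) = 2 * l₀ * Real.sin φ₀ ^ 2 / c := by
    rw [hA0, ← hs2]
    field_simp
    ring
  rw [step1]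
  -- simplify RHS
  have hcc : Real.sqrt c ^ 2 = c := Real.sq_sqrt hc0.le
  have hDnn : 0 ≤ ((1 + Real.sqrt c) ^ 2 - l₀) * (l₀ - (1 - Real.sqrt c) ^ 2) := by
    have h1 : 0 ≤ (1 + Real.sqrt c) ^ 2 - l₀ := by linarith
    have h2 : 0 ≤ l₀ - (1 - Real.sqrt c) ^ 2 := by linarith
    positivity
  have hsqD : Real.sqrt (((1 + Real.sqrt c) ^ 2 - l₀) * (l₀ - (1 - Real.sqrt c) ^ 2)) ^ 2
      = ((1 + Real.sqrt c) ^ 2 - l₀) * (l₀ - (1 - Real.sqrt c) ^ 2) := Real.sq_sqrt hDnn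
  have hpi : (π : ℝ) ≠ 0 := Real.pi_ne_zero
  have hl₀ne : l₀ ≠ 0 := hl0.ne'
  have hfac : π * l₀ * ((1 / (2 * π * l₀)) *
      Real.sqrt (((1 + Real.sqrt c) ^ 2 - l₀) * (l₀ - (1 - Real.sqrt c) ^ 2)))
      = Real.sqrt (((1 + Real.sqrt c) ^ 2 - l₀) * (l₀ - (1 - Real.sqrt c) ^ 2)) / 2 := by
    field_simp
  rw [hfac, div_pow, hsqD, hsin2, hcos, ← hs2, ← hcc]
  field_simp
  rw [Real.sqrt_sq (Real.sqrt_nonneg c)]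
  ring
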